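/- The three elements X₁ = L_{15} + 2L_{24}, X₂ = √3·L_{35} + L_{12} − L_{45}, X₃ = √3·L_{13} + L_{14} + L_{25} of so(5) span a Lie subalgebra isomorphic to so(3); in particular the span of {X₁, X₂, X₃} is closed under the Lie bracket. -/

import Mathlib

open Matrix

attribute [local instance 100] LieRing.ofAssociativeRing
attribute [local instance 100] LieAlgebra.ofAssociativeAlgebra

/-- The standard generators `L_{ab} = E_{ab} − E_{ba}` of `𝔰𝔬(5)` (indices `0,…,4`
standing for `1,…,5`). -/
def Lgen5 (a b : Fin 5) : Matrix (Fin 5) (Fin 5) ℝ :=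
  Matrix.single a b 1 - Matrix.single b a 1

/-- `X₁ = L₁₅ + 2L₂₄`. -/
noncomputable def X₁ : Matrix (Fin 5) (Fin 5) ℝ := Lgen5 0 4 + (2 : ℝ) • Lgen5 1 3

/-- `X₂ = √3·L₃₅ + L₁₂ − L₄₅`. -/
noncomputable def X₂ : Matrix (Fin 5) (Fin 5) ℝ :=
  Real.sqrt 3 • Lgen5 2 4 + Lgen5 0 1 - Lgen5 3 4

/-- `X₃ = √3·L₁₃ + L₁₄ + L₂₅`. -/
noncomputable def X₃ : Matrix (Fin 5) (Fin 5) ℝ :=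
  Real.sqrt 3 • Lgen5 0 2 + Lgen5 0 3 + Lgen5 1 4

/-!
The triple `(X₂, X₁, X₃)` satisfies the commutation relations `⁅v i, v (i + 1)⁆ = v (i + 2)`
(indices mod 3) of the infinitesimal rotations `E_{i+2,i+1} - E_{i+1,i+2}`, which form a basis
of the skew-symmetric `3 × 3` matrices. These relations determine every bracket of the triple, so
its span is closed under the bracket, and two linearly independent triples satisfying them span
Lie algebras with the same structure constants, hence isomorphic ones.
-/

section LieSpan

variable {R L L' : Type*} [CommRing R] [LieRing L] [LieAlgebra R L] [LieRing L'] [LieAlgebra R L']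

theorem LieSubalgebra.coe_lieSpan_eq_span_of_forall_lie_mem {s : Set L}
    (hs : ∀ x ∈ s, ∀ y ∈ s, ⁅x, y⁆ ∈ Submodule.span R s) :
    (LieSubalgebra.lieSpan R L s : Submodule R L) = Submodule.span R s := by
  have lie_mem : ∀ {x y}, x ∈ Submodule.span R s → y ∈ Submodule.span R s →
      ⁅x, y⁆ ∈ Submodule.span R s := by
    intro x y hx hy
    have := Submodule.apply_mem_map₂ (LieModule.toEnd R L L : L →ₗ[R] Module.End R L) hx hy
    rw [Submodule.map₂_span_span] at this
    exact Submodule.span_le.mpr (Set.image2_subset_iff.mpr hs) this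
  let K : LieSubalgebra R L := { Submodule.span R s with lie_mem' := lie_mem }
  exact le_antisymm (LieSubalgebra.lieSpan_le (K := K) |>.mpr Submodule.subset_span)
    LieSubalgebra.submodule_span_le_lieSpan

def LinearEquiv.toLieEquivOfBasis {ι : Type*} (e : L ≃ₗ[R] L') (b : Module.Basis ι R L)
    (h : ∀ i j, e ⁅b i, b j⁆ = ⁅e (b i), e (b j)⁆) : L ≃ₗ⁅R⁆ L' :=
  { e with
    map_lie' := fun {x y} => by
      have key := LinearMap.ext_basis b b
        (B := (LieModule.toEnd R L L : L →ₗ[R] Module.End R L).compr₂ e.toLinearMap)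
        (B' := (LieModule.toEnd R L' L' : L' →ₗ[R] Module.End R L').compl₁₂ e.toLinearMap
          e.toLinearMap) h
      exact LinearMap.congr_fun₂ key x y }

theorem lie_eq_ite_of_cyclic {v : Fin 3 → L} (hv : ∀ i, ⁅v i, v (i + 1)⁆ = v (i + 2))
    (i j : Fin 3) :
    ⁅v i, v j⁆ = if j = i + 1 then v (i + 2) else if i = j + 1 then -v (j + 2) else 0 := by
  have h01 : ⁅v 0, v 1⁆ = v 2 := hv 0
  have h12 : ⁅v 1, v 2⁆ = v 0 := hv 1
  have h20 : ⁅v 2, v 0⁆ = v 1 := hv 2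
  have h10 : ⁅v 1, v 0⁆ = -v 2 := by rw [← lie_skew, h01]
  have h21 : ⁅v 2, v 1⁆ = -v 0 := by rw [← lie_skew, h12]
  have h02 : ⁅v 0, v 2⁆ = -v 1 := by rw [← lie_skew, h20]
  fin_cases i <;> fin_cases j <;> simp [h01, h12, h20, h10, h21, h02]

theorem lie_mem_span_of_cyclic {v : Fin 3 → L} (hv : ∀ i, ⁅v i, v (i + 1)⁆ = v (i + 2)) :
    ∀ x ∈ Set.range v, ∀ y ∈ Set.range v, ⁅x, y⁆ ∈ Submodule.span R (Set.range v) := by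
  rintro _ ⟨i, rfl⟩ _ ⟨j, rfl⟩
  have mem : ∀ k, v k ∈ Submodule.span R (Set.range v) :=
    fun k => Submodule.subset_span ⟨k, rfl⟩
  rw [lie_eq_ite_of_cyclic hv]
  split_ifs
  exacts [mem _, neg_mem (mem _), zero_mem _]

theorem coe_lieSpan_range_eq_span_of_cyclic {v : Fin 3 → L}
    (hv : ∀ i, ⁅v i, v (i + 1)⁆ = v (i + 2)) :
    (LieSubalgebra.lieSpan R L (Set.range v) : Submodule R L) = Submodule.span R (Set.range v) :=
  LieSubalgebra.coe_lieSpan_eq_span_of_forall_lie_mem (lie_mem_span_of_cyclic hv)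

noncomputable def basisLieSpanOfCyclic {v : Fin 3 → L} (hv : ∀ i, ⁅v i, v (i + 1)⁆ = v (i + 2))
    (hli : LinearIndependent R v) :
    Module.Basis (Fin 3) R (LieSubalgebra.lieSpan R L (Set.range v)) :=
  (Module.Basis.span hli).map (LinearEquiv.ofEq _ _ (coe_lieSpan_range_eq_span_of_cyclic hv).symm)

theorem coe_basisLieSpanOfCyclic {v : Fin 3 → L} (hv : ∀ i, ⁅v i, v (i + 1)⁆ = v (i + 2))
    (hli : LinearIndependent R v) (i : Fin 3) : (basisLieSpanOfCyclic hv hli i : L) = v i := by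
  simp only [basisLieSpanOfCyclic, Module.Basis.map_apply, Module.Basis.span_apply]
  rfl

noncomputable def lieEquivLieSpanOfCyclic {v : Fin 3 → L} {w : Fin 3 → L'}
    (hv : ∀ i, ⁅v i, v (i + 1)⁆ = v (i + 2)) (hw : ∀ i, ⁅w i, w (i + 1)⁆ = w (i + 2))
    (hvi : LinearIndependent R v) (hwi : LinearIndependent R w) :
    LieSubalgebra.lieSpan R L (Set.range v) ≃ₗ⁅R⁆ LieSubalgebra.lieSpan R L' (Set.range w) :=
  let b := basisLieSpanOfCyclic hv hvi
  let b' := basisLieSpanOfCyclic hw hwi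
  have hb : ∀ i, ⁅b i, b (i + 1)⁆ = b (i + 2) := fun i => by
    ext; simp only [b, LieSubalgebra.coe_bracket, coe_basisLieSpanOfCyclic, hv]
  have hb' : ∀ i, ⁅b' i, b' (i + 1)⁆ = b' (i + 2) := fun i => by
    ext; simp only [b', LieSubalgebra.coe_bracket, coe_basisLieSpanOfCyclic, hw]
  (b.equiv b' (Equiv.refl _)).toLieEquivOfBasis b fun i j => by
    simp only [lie_eq_ite_of_cyclic hb, Module.Basis.equiv_apply, Equiv.refl_apply,
      lie_eq_ite_of_cyclic hb']
    split_ifs <;> simp [Module.Basis.equiv_apply]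

end LieSpan

section Rotation

variable (R : Type*) [CommRing R]

def rotationGenerator (i : Fin 3) : Matrix (Fin 3) (Fin 3) R :=
  single (i + 2) (i + 1) 1 - single (i + 1) (i + 2) 1

theorem lie_rotationGenerator (i : Fin 3) :
    ⁅rotationGenerator R i, rotationGenerator R (i + 1)⁆ = rotationGenerator R (i + 2) := by
  ext a b
  fin_cases i <;> fin_cases a <;> fin_cases b <;>
    simp [rotationGenerator, Ring.lie_def, mul_apply, single_apply]

theorem linearIndependent_rotationGenerator : LinearIndependent R (rotationGenerator R) := by
  rw [Fintype.linearIndependent_iff]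
  intro g hg i
  have entry := congrFun₂ hg (i + 2) (i + 1)
  fin_cases i <;>
    simpa [rotationGenerator, Fin.sum_univ_three, Matrix.sum_apply, single_apply] using entry

theorem rotationGenerator_mem_skewAdjoint (i : Fin 3) :
    rotationGenerator R i ∈ skewAdjointMatricesSubmodule (1 : Matrix (Fin 3) (Fin 3) R) := by
  simp [Matrix.IsSkewAdjoint, Matrix.IsAdjointPair, rotationGenerator, transpose_single]

theorem skewAdjointMatricesLieSubalgebra_one_eq_lieSpan [IsAddTorsionFree R] :
    skewAdjointMatricesLieSubalgebra (1 : Matrix (Fin 3) (Fin 3) R) =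
      LieSubalgebra.lieSpan R _ (Set.range (rotationGenerator R)) := by
  rw [← LieSubalgebra.toSubmodule_inj,
    coe_lieSpan_range_eq_span_of_cyclic (lie_rotationGenerator R)]
  refine le_antisymm (fun B hB => ?_) (Submodule.span_le.mpr ?_)
  · have skew : ∀ a b, B b a = -B a b := by
      simp only [LieSubalgebra.mem_toSubmodule, mem_skewAdjointMatricesLieSubalgebra,
        mem_skewAdjointMatricesSubmodule, Matrix.IsSkewAdjoint, Matrix.IsAdjointPair, mul_one,
        one_mul] at hB
      exact congrFun₂ hB
    have diag : ∀ a, B a a = 0 := fun a => self_eq_neg.mp (skew a a)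
    rw [Submodule.mem_span_range_iff_exists_fun]
    refine ⟨fun i => B (i + 2) (i + 1), ?_⟩
    ext a b
    fin_cases a <;> fin_cases b <;>
      simp [rotationGenerator, Fin.sum_univ_three, Matrix.sum_apply, single_apply, diag] <;>
      exact (skew _ _).symm
  · rintro _ ⟨i, rfl⟩
    exact rotationGenerator_mem_skewAdjoint R i

end Rotation

theorem lie_X_cyclic (i : Fin 3) :
    ⁅![X₂, X₁, X₃] i, ![X₂, X₁, X₃] (i + 1)⁆ = ![X₂, X₁, X₃] (i + 2) := by
  ext a b
  fin_cases i <;> fin_cases a <;> fin_cases b <;>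
    simp [Ring.lie_def, mul_apply, Fin.sum_univ_five, X₁, X₂, X₃, Lgen5, single_apply] <;>
    norm_num

theorem linearIndependent_X : LinearIndependent ℝ ![X₂, X₁, X₃] := by
  rw [Fintype.linearIndependent_iff]
  intro g hg
  have entry : ∀ a b, ∑ i, g i * ![X₂, X₁, X₃] i a b = 0 := fun a b => by
    simpa [Matrix.sum_apply] using congrFun₂ hg a b
  have h01 := entry 0 1
  have h04 := entry 0 4
  have h03 := entry 0 3
  simp [Fin.sum_univ_three, X₁, X₂, X₃, Lgen5] at h01 h04 h03
  intro i
  fin_cases i <;> simp [h01, h04, h03]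

/-- The elements `X₁, X₂, X₃` of `𝔰𝔬(5)` span a Lie subalgebra isomorphic to
`𝔰𝔬(3)`; in particular their span is closed under the Lie bracket. -/
theorem stmt8 :
    ∃ s : LieSubalgebra ℝ (Matrix (Fin 5) (Fin 5) ℝ),
      s.toSubmodule = Submodule.span ℝ {X₁, X₂, X₃} ∧
      Nonempty (s ≃ₗ⁅ℝ⁆
        ↥(skewAdjointMatricesLieSubalgebra (1 : Matrix (Fin 3) (Fin 3) ℝ))) := by
  refine ⟨LieSubalgebra.lieSpan ℝ _ (Set.range ![X₂, X₁, X₃]), ?_, ?_⟩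
  · rw [coe_lieSpan_range_eq_span_of_cyclic lie_X_cyclic]
    simp only [Matrix.range_cons, Matrix.range_empty, Set.union_empty, Set.singleton_union]
    rw [Set.insert_comm, Set.pair_comm]
  · rw [skewAdjointMatricesLieSubalgebra_one_eq_lieSpan]
    exact ⟨lieEquivLieSpanOfCyclic lie_X_cyclic (lie_rotationGenerator ℝ) linearIndependent_X
      (linearIndependent_rotationGenerator ℝ)⟩
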